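/- Let s be a rational number and let r > 0 be a real number with r^2 rational. Then J_s(r) ≠ 0. -/
import Mathlib

open Real

/-- Auxiliary entire function: `besselF x c = ∑ (-x)^k / (k! Γ(c+k))`. -/
noncomputable def besselF (x c : ℝ) : ℝ :=
  ∑' k : ℕ, (-x) ^ k / (k.factorial * Real.Gamma (c + k))

lemma inv_Gamma_succ (y : ℝ) : (Real.Gamma y)⁻¹ = y * (Real.Gamma (y + 1))⁻¹ := by
  by_cases h0 : y = 0
  · simp [h0, Real.Gamma_zero]
  · rw [Real.Gamma_add_one h0]
    by_cases hG : Real.Gamma y = 0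
    · simp [hG]
    · field_simp

lemma factorial_mul_Gamma_le {c : ℝ} (hc : 1 ≤ c) (k : ℕ) :
    (k.factorial : ℝ) * Real.Gamma c ≤ Real.Gamma (c + k) := by
  induction k with
  | zero => simp
  | succ k ih =>
      have hpos : (0:ℝ) < Real.Gamma c := Real.Gamma_pos_of_pos (by linarith)
      have hck : c + (k:ℝ) ≠ 0 := by positivity
      have h1 : Real.Gamma (c + (k+1:ℕ)) = (c + k) * Real.Gamma (c + k) := by
        push_cast
        rw [show c + ((k:ℝ) + 1) = (c + k) + 1 by ring, Real.Gamma_add_one hck]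
      rw [h1]
      have h2 : ((k+1:ℕ):ℝ) * ((k.factorial:ℝ) * Real.Gamma c) ≤ (c + k) * Real.Gamma (c + k) := by
        apply mul_le_mul (by push_cast; linarith) ih (by positivity)
        positivity
      calc ((k+1).factorial : ℝ) * Real.Gamma c
          = ((k+1:ℕ):ℝ) * ((k.factorial:ℝ) * Real.Gamma c) := by
            rw [Nat.factorial_succ]; push_cast; ring
        _ ≤ _ := h2

lemma pow_mul_Gamma_le {c : ℝ} (hc : 1 ≤ c) (k : ℕ) :
    c ^ k * Real.Gamma c ≤ Real.Gamma (c + k) := by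
  induction k with
  | zero => simp
  | succ k ih =>
      have hpos : (0:ℝ) < Real.Gamma c := Real.Gamma_pos_of_pos (by linarith)
      have hck : c + (k:ℝ) ≠ 0 := by positivity
      have h1 : Real.Gamma (c + (k+1:ℕ)) = (c + k) * Real.Gamma (c + k) := by
        push_cast
        rw [show c + ((k:ℝ) + 1) = (c + k) + 1 by ring, Real.Gamma_add_one hck]
      rw [h1]
      calc c ^ (k+1) * Real.Gamma c = c * (c ^ k * Real.Gamma c) := by ring
        _ ≤ (c + k) * (c ^ k * Real.Gamma c) := by
            apply mul_le_mul_of_nonneg_right (by linarith [Nat.cast_nonneg (α := ℝ) k])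
            positivity
        _ ≤ (c + k) * Real.Gamma (c + k) := by
            apply mul_le_mul_of_nonneg_left ih (by linarith [Nat.cast_nonneg (α := ℝ) k])

lemma besselF_summable (x c : ℝ) :
    Summable (fun k : ℕ => (-x) ^ k / (k.factorial * Real.Gamma (c + k))) := by
  set k₀ : ℕ := ⌈1 - c⌉₊ with hk₀
  have hck₀ : (1:ℝ) ≤ c + k₀ := by
    have := Nat.le_ceil (1 - c)
    simp only [← hk₀] at this; linarith
  have hG0 : 0 < Real.Gamma (c + k₀) := Real.Gamma_pos_of_pos (by linarith)
  rw [← summable_nat_add_iff k₀]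
  apply Summable.of_norm_bounded
    (g := fun k : ℕ => (|x| ^ k₀ / Real.Gamma (c + k₀)) * (|x| ^ k / k.factorial))
  · exact ((Real.summable_pow_div_factorial |x|).mul_left _)
  · intro k
    have hGk : (k.factorial : ℝ) * Real.Gamma (c + k₀) ≤ Real.Gamma (c + (k + k₀ : ℕ)) := by
      have := factorial_mul_Gamma_le hck₀ k
      rw [show c + ((k + k₀ : ℕ) : ℝ) = (c + k₀) + k by push_cast; ring]
      exact this
    have hGpos : 0 < Real.Gamma (c + (k + k₀ : ℕ)) :=
      lt_of_lt_of_le (by positivity) hGk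
    have h1 : ‖(-x) ^ (k + k₀) / ((k + k₀).factorial * Real.Gamma (c + (k + k₀ : ℕ)))‖
        = |x| ^ (k + k₀) / (((k + k₀).factorial : ℝ) * Real.Gamma (c + (k + k₀ : ℕ))) := by
      rw [norm_div, norm_pow, norm_neg, Real.norm_eq_abs, Real.norm_eq_abs]
      congr 1
      exact abs_of_pos (by positivity : (0:ℝ) < ((k + k₀).factorial : ℝ) * Real.Gamma (c + (k + k₀ : ℕ)) ) |>.symm ▸ rfl
    rw [h1]
    have h2 : (|x| ^ k₀ / Real.Gamma (c + k₀)) * (|x| ^ k / k.factorial)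
        = |x| ^ (k + k₀) / ((k.factorial : ℝ) * Real.Gamma (c + k₀)) := by
      rw [pow_add]; ring
    rw [h2]
    apply div_le_div_of_nonneg_left (by positivity) (by positivity)
    calc (k.factorial : ℝ) * Real.Gamma (c + k₀) ≤ Real.Gamma (c + (k + k₀ : ℕ)) := hGk
      _ ≤ ((k + k₀).factorial : ℝ) * Real.Gamma (c + (k + k₀ : ℕ)) :=
          le_mul_of_one_le_left hGpos.le
            (by exact_mod_cast Nat.one_le_iff_ne_zero.mpr (Nat.factorial_ne_zero _))

lemma besselF_rec (x c : ℝ) :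
    besselF x c = c * besselF x (c + 1) - x * besselF x (c + 2) := by
  set u : ℕ → ℝ := fun k => (-x) ^ k / (k.factorial * Real.Gamma (c + 1 + k)) with hu_def
  set v : ℕ → ℝ := fun k => (-x) ^ k / (k.factorial * Real.Gamma (c + 2 + k)) with hv_def
  have hshift : ∀ j : ℕ, ((j:ℝ) + 1) * u (j + 1) = -x * v j := by
    intro j
    have h1 : u (j+1) = (-x) ^ (j+1) / (((j:ℝ)+1) * (j.factorial * Real.Gamma (c + 2 + j))) := by
      simp only [hu_def]
      congr 1
      rw [Nat.factorial_succ]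
      push_cast
      rw [show c + 1 + ((j:ℝ) + 1) = c + 2 + j by ring]
      ring
    rw [h1, mul_div_assoc']
    rw [mul_div_mul_left _ _ (by positivity : ((j:ℝ)+1) ≠ 0)]
    rw [pow_succ, hv_def]
    ring
  have hvsum : Summable v := besselF_summable x (c+2)
  have hwsum : Summable (fun k : ℕ => (k:ℝ) * u k) := by
    rw [← summable_nat_add_iff 1]
    have : (fun k : ℕ => ((k+1 : ℕ):ℝ) * u (k+1)) = fun k : ℕ => -x * v k := by
      funext j; push_cast; exact hshift j
    rw [this]
    exact hvsum.mul_left _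
  have husum : Summable u := besselF_summable x (c+1)
  have ht : ∀ k : ℕ, (-x) ^ k / (k.factorial * Real.Gamma (c + k))
      = c * u k + (k:ℝ) * u k := by
    intro k
    have h2 : ((k.factorial : ℝ) * Real.Gamma (c + k))⁻¹
        = (c + k) * ((k.factorial : ℝ) * Real.Gamma (c + 1 + k))⁻¹ := by
      rw [mul_inv, mul_inv, inv_Gamma_succ (c + k),
        show c + (k:ℝ) + 1 = c + 1 + k by ring]
      ring
    rw [div_eq_mul_inv, h2, hu_def]
    simp only [div_eq_mul_inv]
    ring
  calc besselF x c = ∑' k : ℕ, (c * u k + (k:ℝ) * u k) := tsum_congr ht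
    _ = (∑' k : ℕ, c * u k) + ∑' k : ℕ, (k:ℝ) * u k :=
        Summable.tsum_add (husum.mul_left c) hwsum
    _ = c * besselF x (c+1) + ∑' k : ℕ, (k:ℝ) * u k := by rw [tsum_mul_left]; rfl
    _ = c * besselF x (c+1) + ((0:ℝ) * u 0 + ∑' j : ℕ, ((j+1:ℕ):ℝ) * u (j+1)) := by
        rw [Summable.tsum_eq_zero_add hwsum]; norm_num
    _ = c * besselF x (c+1) + ∑' j : ℕ, -x * v j := by
        congr 1
        rw [zero_mul, zero_add]
        apply tsum_congr
        intro j; push_cast; exact hshift j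
    _ = c * besselF x (c+1) - x * besselF x (c+2) := by
        rw [tsum_mul_left]
        have hv2 : besselF x (c+2) = ∑' j : ℕ, v j := rfl
        rw [hv2]; ring

lemma besselJ_eq_besselF (ν r : ℝ) (hr : 0 < r) :
    (∑' k : ℕ, ((-1 : ℝ) ^ k / (k.factorial * Real.Gamma (ν + k + 1))) *
      (r / 2) ^ (ν + 2 * (k : ℝ))) = (r/2) ^ ν * besselF ((r/2)^2) (ν + 1) := by
  have h2 : (0:ℝ) < r / 2 := by linarith
  rw [besselF, ← tsum_mul_left]
  apply tsum_congr
  intro k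
  have hpow : (r/2) ^ (ν + 2 * (k:ℝ)) = (r/2) ^ ν * ((r/2)^2) ^ k := by
    rw [Real.rpow_add h2]
    congr 1
    rw [show (2 * (k:ℝ)) = ((2 * k : ℕ) : ℝ) by push_cast; ring,
      Real.rpow_natCast, pow_mul]
  rw [hpow]
  have hneg : (-((r/2)^2)) ^ k = (-1:ℝ)^k * ((r/2)^2)^k := by
    rw [neg_pow]
  rw [hneg, show ν + (k:ℝ) + 1 = ν + 1 + k by ring]
  ring

lemma besselF_bounds {x c : ℝ} (hx : 0 < x) (hc2 : 2 ≤ c) (hcx : 4 * x ≤ c) :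
    (Real.Gamma c)⁻¹ / 2 ≤ besselF x c ∧ besselF x c ≤ 2 * (Real.Gamma c)⁻¹ := by
  have hc0 : (0:ℝ) < c := by linarith
  have hG : 0 < Real.Gamma c := Real.Gamma_pos_of_pos hc0
  have hsum := besselF_summable x c
  have h0 : (-x) ^ 0 / ((Nat.factorial 0 : ℝ) * Real.Gamma (c + (0:ℕ))) = (Real.Gamma c)⁻¹ := by
    norm_num
  have hsplit : besselF x c = (Real.Gamma c)⁻¹
      + ∑' k : ℕ, (-x) ^ (k+1) / (((k+1).factorial : ℝ) * Real.Gamma (c + (k+1:ℕ))) := by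
    rw [besselF, Summable.tsum_eq_zero_add hsum, h0]
  -- bound the tail
  have hr1 : x / c ≤ 1/4 := by rw [div_le_iff₀ hc0]; linarith
  have hr0 : 0 < x / c := by positivity
  have htail : |∑' k : ℕ, (-x) ^ (k+1) / (((k+1).factorial : ℝ) * Real.Gamma (c + (k+1:ℕ)))|
      ≤ (Real.Gamma c)⁻¹ / 2 := by
    have hb : ∀ k : ℕ, |(-x) ^ (k+1) / (((k+1).factorial : ℝ) * Real.Gamma (c + (k+1:ℕ)))|
        ≤ (Real.Gamma c)⁻¹ * (x/c) ^ (k+1) := by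
      intro k
      have hGk : c ^ (k+1) * Real.Gamma c ≤ Real.Gamma (c + (k+1:ℕ)) :=
        pow_mul_Gamma_le (by linarith) (k+1)
      have hGkpos : 0 < Real.Gamma (c + (k+1:ℕ)) := lt_of_lt_of_le (by positivity) hGk
      rw [abs_div, abs_pow, abs_neg, abs_of_pos hx,
        abs_of_pos (by positivity : (0:ℝ) < ((k+1).factorial : ℝ) * Real.Gamma (c + (k+1:ℕ)))]
      have hd : c ^ (k+1) * Real.Gamma c ≤ ((k+1).factorial : ℝ) * Real.Gamma (c + (k+1:ℕ)) := by
        calc c ^ (k+1) * Real.Gamma c ≤ Real.Gamma (c + (k+1:ℕ)) := hGk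
          _ ≤ _ := le_mul_of_one_le_left hGkpos.le
              (by exact_mod_cast Nat.one_le_iff_ne_zero.mpr (Nat.factorial_ne_zero _))
      calc x ^ (k+1) / (((k+1).factorial : ℝ) * Real.Gamma (c + (k+1:ℕ)))
          ≤ x ^ (k+1) / (c ^ (k+1) * Real.Gamma c) :=
            div_le_div_of_nonneg_left (by positivity) (by positivity) hd
        _ = (Real.Gamma c)⁻¹ * (x/c) ^ (k+1) := by
            rw [div_pow]; field_simp
    have hgeom : Summable (fun k : ℕ => (Real.Gamma c)⁻¹ * (x/c) ^ (k+1)) := by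
      apply Summable.mul_left
      exact (summable_geometric_of_lt_one hr0.le (by linarith)).comp_injective (add_left_injective 1)
    have habs : Summable (fun k : ℕ =>
        |(-x) ^ (k+1) / (((k+1).factorial : ℝ) * Real.Gamma (c + (k+1:ℕ)))|) :=
      Summable.of_nonneg_of_le (fun k => abs_nonneg _) hb hgeom
    calc |∑' k : ℕ, (-x) ^ (k+1) / (((k+1).factorial : ℝ) * Real.Gamma (c + (k+1:ℕ)))|
        ≤ ∑' k : ℕ, |(-x) ^ (k+1) / (((k+1).factorial : ℝ) * Real.Gamma (c + (k+1:ℕ)))| := by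
          have h := norm_tsum_le_tsum_norm
            (f := fun k : ℕ => (-x) ^ (k+1) / (((k+1).factorial : ℝ) * Real.Gamma (c + (k+1:ℕ))))
            (by simp only [Real.norm_eq_abs]; exact habs)
          simp only [Real.norm_eq_abs] at h
          exact h
      _ ≤ ∑' k : ℕ, (Real.Gamma c)⁻¹ * (x/c) ^ (k+1) := Summable.tsum_le_tsum hb habs hgeom
      _ = (Real.Gamma c)⁻¹ * (x/c) * (1 - x/c)⁻¹ := by
          have : (fun k : ℕ => (Real.Gamma c)⁻¹ * (x/c) ^ (k+1))
              = fun k : ℕ => ((Real.Gamma c)⁻¹ * (x/c)) * (x/c) ^ k := by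
            funext k; rw [pow_succ]; ring
          rw [this, tsum_mul_left, tsum_geometric_of_lt_one hr0.le (by linarith)]
      _ ≤ (Real.Gamma c)⁻¹ / 2 := by
          have h34 : (0:ℝ) < 1 - x/c := by linarith
          have hinv : (1 - x/c)⁻¹ ≤ (3/4 : ℝ)⁻¹ := by
            apply inv_anti₀ (by norm_num) (by linarith)
          have : (x/c) * (1 - x/c)⁻¹ ≤ (1/4) * (4/3) := by
            apply mul_le_mul hr1 (by norm_num at hinv ⊢; linarith) (by positivity) (by norm_num)
          nlinarith [hG, inv_pos.mpr hG]
  constructor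
  · have := abs_le.mp htail
    rw [hsplit]; linarith [this.1]
  · have := abs_le.mp htail
    rw [hsplit]; linarith [this.2]

/-- Integer sequence tracking denominators in the recurrence. -/
def besselB (p q a b : ℤ) : ℕ → ℤ
  | 0 => 0
  | 1 => 1
  | (n+2) => b * (p + q * (n+1)) * besselB p q a b (n+1) - a * b * q^2 * besselB p q a b n

lemma besselB_step (p q a b : ℤ) (n : ℕ) :
    besselB p q a b (n+2)
      = b * (p + q * (n+1)) * besselB p q a b (n+1) - a * b * q^2 * besselB p q a b n := rfl

/-- The Bessel function of the first kind of order `ν`, for `r > 0`: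
`J_ν(r) = ∑_{k=0}^∞ ((-1)^k / (k! Γ(ν+k+1))) (r/2)^(ν+2k)`. -/
noncomputable def besselJ (ν r : ℝ) : ℝ :=
  ∑' k : ℕ, ((-1 : ℝ) ^ k / (k.factorial * Real.Gamma (ν + k + 1))) *
    (r / 2) ^ (ν + 2 * (k : ℝ))

theorem besselJ_ne_zero (s : ℚ) (r : ℝ) (hr : 0 < r) (hq : ∃ q : ℚ, r ^ 2 = (q : ℝ)) :
    besselJ (s : ℝ) r ≠ 0 := by
  obtain ⟨q0, hq0⟩ := hq
  intro h
  have h2 : (0:ℝ) < r / 2 := by linarith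
  set ν : ℝ := (s : ℝ) with hν
  set x : ℝ := (r/2)^2 with hxdef
  have hx : 0 < x := by positivity
  set xq : ℚ := q0 / 4 with hxqdef
  have hxq : (xq : ℝ) = x := by
    rw [hxqdef, hxdef]; push_cast; rw [← hq0]; ring
  have hxqpos : 0 < xq := by
    have : (0:ℝ) < (xq:ℝ) := by rw [hxq]; exact hx
    exact_mod_cast this
  -- F 0 = 0
  have hzero : besselF x (ν + 1) = 0 := by
    have hJ : besselJ ν r = (r/2) ^ ν * besselF x (ν + 1) := besselJ_eq_besselF ν r hr
    rw [h] at hJ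
    have hrp : (r/2) ^ ν ≠ 0 := (Real.rpow_pos_of_pos h2 ν).ne'
    exact (mul_eq_zero.mp hJ.symm).resolve_left hrp
  set F : ℕ → ℝ := fun n => besselF x (ν + 1 + n) with hFdef
  have hF0 : F 0 = 0 := by
    have : ν + 1 + ((0:ℕ):ℝ) = ν + 1 := by norm_num
    rw [hFdef]; simpa [this] using hzero
  have hFrec : ∀ n : ℕ, F n = (ν + 1 + n) * F (n+1) - x * F (n+2) := by
    intro n
    have hrec := besselF_rec x (ν + 1 + n)
    have e1 : ν + 1 + (n:ℝ) + 1 = ν + 1 + ((n+1 : ℕ):ℝ) := by push_cast; ring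
    have e2 : ν + 1 + (n:ℝ) + 2 = ν + 1 + ((n+2 : ℕ):ℝ) := by push_cast; ring
    rw [e1, e2] at hrec
    exact hrec
  -- rational data
  set p : ℤ := s.num with hp
  set qd : ℤ := (s.den : ℤ) with hqd
  set a : ℤ := xq.num with ha
  set b : ℤ := (xq.den : ℤ) with hb
  have hqdpos : (0:ℤ) < qd := by rw [hqd]; exact_mod_cast s.pos
  have hapos : (0:ℤ) < a := Rat.num_pos.mpr hxqpos
  have hbpos : (0:ℤ) < b := by rw [hb]; exact_mod_cast xq.pos
  have hνval : ν = (p:ℝ) / (qd:ℝ) := by rw [hν, Rat.cast_def]; push_cast; rfl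
  have hxval : x = (a:ℝ) / (b:ℝ) := by rw [← hxq, Rat.cast_def]; push_cast; rfl
  have hqdR : ((qd:ℝ)) ≠ 0 := by exact_mod_cast hqdpos.ne'
  have hbR : ((b:ℝ)) ≠ 0 := by exact_mod_cast hbpos.ne'
  have haR : ((a:ℝ)) ≠ 0 := by exact_mod_cast hapos.ne'
  set K : ℤ := a * qd with hK
  have hKpos : (0:ℤ) < K := mul_pos hapos hqdpos
  have hK1 : (1:ℝ) ≤ (K:ℝ) := by exact_mod_cast hKpos
  -- key scalar identities
  have s2 : ((K:ℝ))^2 = x * ((a:ℝ) * b * qd^2) := by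
    rw [hK, hxval]; push_cast; field_simp
  -- the key integrality identity
  have hkey : ∀ n : ℕ, ((K:ℝ))^n * F (n+1) = ((besselB p qd a b (n+1) : ℤ) : ℝ) * F 1 := by
    have hx2 : x * F 2 = (ν + 1) * F 1 := by
      have h0 := hFrec 0
      rw [hF0] at h0
      push_cast at h0
      linarith
    have main : ∀ n : ℕ,
        ((K:ℝ))^n * F (n+1) = ((besselB p qd a b (n+1) : ℤ) : ℝ) * F 1 ∧
        ((K:ℝ))^(n+1) * F (n+2) = ((besselB p qd a b (n+2) : ℤ) : ℝ) * F 1 := by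
      intro n
      induction n with
      | zero =>
          constructor
          · simp [besselB]
          · have hB2 : ((besselB p qd a b 2 : ℤ) : ℝ) = (b:ℝ) * ((p:ℝ) + qd) := by
              rw [besselB_step p qd a b 0]
              push_cast [besselB]; ring
            have s1 : ((K:ℝ)) * (ν + 1) = x * ((b:ℝ) * ((p:ℝ) + qd)) := by
              rw [hK, hνval, hxval]; push_cast; field_simp
            apply mul_left_cancel₀ hx.ne'
            rw [hB2]
            calc x * ((K:ℝ)^1 * F 2) = (K:ℝ) * (x * F 2) := by ring
              _ = (K:ℝ) * ((ν + 1) * F 1) := by rw [hx2]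
              _ = ((K:ℝ) * (ν+1)) * F 1 := by ring
              _ = (x * ((b:ℝ) * ((p:ℝ) + qd))) * F 1 := by rw [s1]
              _ = x * ((b:ℝ) * ((p:ℝ) + qd) * F 1) := by ring
      | succ n ih =>
          obtain ⟨ih1, ih2⟩ := ih
          refine ⟨ih2, ?_⟩
          have hstep := hFrec (n+1)
          have hxF3 : x * F (n+3) = (ν + (n:ℝ) + 2) * F (n+2) - F (n+1) := by
            push_cast at hstep ⊢
            have : ν + 1 + ((n:ℝ)+1) = ν + (n:ℝ) + 2 := by ring
            rw [this] at hstep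
            linarith
          have s1 : ((K:ℝ)) * (ν + (n:ℝ) + 2) = x * ((b:ℝ) * ((p:ℝ) + qd * ((n:ℝ)+2))) := by
            rw [hK, hνval, hxval]; push_cast; field_simp; ring
          have hB3 : ((besselB p qd a b (n+3) : ℤ) : ℝ)
              = (b:ℝ) * ((p:ℝ) + qd * ((n:ℝ)+2)) * ((besselB p qd a b (n+2) : ℤ) : ℝ)
                - (a:ℝ) * b * qd^2 * ((besselB p qd a b (n+1) : ℤ) : ℝ) := by
            rw [show n+3 = (n+1)+2 by ring, besselB_step p qd a b (n+1)]
            push_cast; ring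
          apply mul_left_cancel₀ hx.ne'
          rw [hB3]
          have hc1 : ((K:ℝ))^(n+2) * (x * F (n+3))
              = (K:ℝ)^(n+2) * ((ν + (n:ℝ) + 2) * F (n+2)) - (K:ℝ)^(n+2) * F (n+1) := by
            rw [hxF3]; ring
          calc x * ((K:ℝ)^(n+1+1) * F (n+1+2))
              = ((K:ℝ))^(n+2) * (x * F (n+3)) := by ring_nf
            _ = (K:ℝ)^(n+2) * ((ν + (n:ℝ) + 2) * F (n+2)) - (K:ℝ)^(n+2) * F (n+1) := hc1
            _ = ((K:ℝ) * (ν + (n:ℝ) + 2)) * ((K:ℝ)^(n+1) * F (n+2))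
                - ((K:ℝ))^2 * ((K:ℝ)^n * F (n+1)) := by ring
            _ = (x * ((b:ℝ) * ((p:ℝ) + qd * ((n:ℝ)+2)))) * (((besselB p qd a b (n+2) : ℤ) : ℝ) * F 1)
                - (x * ((a:ℝ) * b * qd^2)) * (((besselB p qd a b (n+1) : ℤ) : ℝ) * F 1) := by
                rw [s1, s2, ih1, ih2]
            _ = x * (((b:ℝ) * ((p:ℝ) + qd * ((n:ℝ)+2)) * ((besselB p qd a b (n+2) : ℤ) : ℝ)
                - (a:ℝ) * b * qd^2 * ((besselB p qd a b (n+1) : ℤ) : ℝ)) * F 1) := by ring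
    exact fun n => (main n).1
  -- choose N beyond which the bounds lemma applies
  set N : ℕ := ⌈|ν| + 3 + 4*x⌉₊ with hN
  have hNbig : |ν| + 3 + 4*x ≤ (N:ℝ) := Nat.le_ceil _
  have hcN : ∀ n : ℕ, N ≤ n → 2 ≤ ν + 1 + (n:ℝ) ∧ 4*x ≤ ν + 1 + (n:ℝ) := by
    intro n hn
    have hn' : (N:ℝ) ≤ n := by exact_mod_cast hn
    have hν1 : -|ν| ≤ ν := neg_abs_le ν
    constructor <;> nlinarith [hx]
  have hFpos : ∀ n : ℕ, N ≤ n → 0 < F n := by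
    intro n hn
    obtain ⟨hA, hB⟩ := hcN n hn
    have hGpos : 0 < Real.Gamma (ν+1+(n:ℝ)) := Real.Gamma_pos_of_pos (by linarith)
    have hlow := (besselF_bounds hx hA hB).1
    calc (0:ℝ) < (Real.Gamma (ν+1+(n:ℝ)))⁻¹/2 := by positivity
      _ ≤ F n := hlow
  have hGN : 0 < Real.Gamma (ν+1+(N:ℝ)) :=
    Real.Gamma_pos_of_pos (by linarith [(hcN N le_rfl).1])
  have hFub : ∀ m : ℕ, F (N + m) ≤ 2 * (((m.factorial : ℝ)) * Real.Gamma (ν+1+(N:ℝ)))⁻¹ := by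
    intro m
    obtain ⟨hA, hB⟩ := hcN (N+m) (Nat.le_add_right N m)
    have hup := (besselF_bounds hx hA hB).2
    have hGgrow : (m.factorial : ℝ) * Real.Gamma (ν+1+(N:ℝ)) ≤ Real.Gamma (ν+1+((N+m : ℕ):ℝ)) := by
      have := factorial_mul_Gamma_le (c := ν+1+(N:ℝ)) (by linarith [(hcN N le_rfl).1]) m
      rw [show ν+1+((N+m : ℕ):ℝ) = (ν+1+(N:ℝ)) + (m:ℝ) by push_cast; ring]
      exact this
    have hinv : (Real.Gamma (ν+1+((N+m : ℕ):ℝ)))⁻¹ ≤ ((m.factorial : ℝ) * Real.Gamma (ν+1+(N:ℝ)))⁻¹ := by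
      apply inv_anti₀ (by positivity) hGgrow
    calc F (N+m) ≤ 2 * (Real.Gamma (ν+1+((N+m:ℕ):ℝ)))⁻¹ := hup
      _ ≤ 2 * ((m.factorial : ℝ) * Real.Gamma (ν+1+(N:ℝ)))⁻¹ := by linarith
  by_cases hF1 : F 1 = 0
  · have hall : ∀ n : ℕ, F n = 0 ∧ F (n+1) = 0 := by
      intro n
      induction n with
      | zero => exact ⟨hF0, hF1⟩
      | succ n ih =>
          refine ⟨ih.2, ?_⟩
          have hrn := hFrec n
          rw [ih.1, ih.2] at hrn
          have hxF : x * F (n+2) = 0 := by linarith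
          exact (mul_eq_zero.mp hxF).resolve_left hx.ne'
    exact absurd (hall N).1 (hFpos N le_rfl).ne'
  · set C : ℝ := 2 * (K:ℝ)^N / Real.Gamma (ν+1+(N:ℝ)) with hC
    have hub : ∀ m : ℕ, |F 1| ≤ C * ((K:ℝ)^(m+1) / (((m+1).factorial : ℝ))) := by
      intro m
      have hn := hkey (N + m)
      have hFposm : 0 < F (N + m + 1) := hFpos (N+m+1) (by omega)
      have hKR : (0:ℝ) < (K:ℝ) := by exact_mod_cast hKpos
      have hLHSpos : 0 < (K:ℝ)^(N+m) * F (N+m+1) := by positivity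
      have hBne : besselB p qd a b (N+m+1) ≠ 0 := by
        intro h0
        rw [h0] at hn
        simp only [Int.cast_zero, zero_mul] at hn
        exact hLHSpos.ne' hn
      have hBabs : (1:ℝ) ≤ |((besselB p qd a b (N+m+1) : ℤ):ℝ)| := by
        rw [← Int.cast_abs]
        exact_mod_cast Int.one_le_abs hBne
      have step1 : |F 1| ≤ (K:ℝ)^(N+m) * F (N+m+1) := by
        calc |F 1| ≤ |((besselB p qd a b (N+m+1) : ℤ):ℝ)| * |F 1| :=
              le_mul_of_one_le_left (abs_nonneg _) hBabs
          _ = |((besselB p qd a b (N+m+1) : ℤ):ℝ) * F 1| := (abs_mul _ _).symm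
          _ = |(K:ℝ)^(N+m) * F (N+m+1)| := by rw [← hn]
          _ = (K:ℝ)^(N+m) * F (N+m+1) := abs_of_pos hLHSpos
      have step2 : (K:ℝ)^(N+m) * F (N+m+1)
          ≤ ((K:ℝ)^N * (K:ℝ)^(m+1)) * (2 * ((((m+1).factorial : ℝ)) * Real.Gamma (ν+1+(N:ℝ)))⁻¹) := by
        have hKpow : (K:ℝ)^(N+m) ≤ (K:ℝ)^N * (K:ℝ)^(m+1) := by
          rw [← pow_add]
          exact pow_le_pow_right₀ hK1 (by omega)
        have hFm : F (N + m + 1) ≤ 2 * ((((m+1).factorial : ℝ)) * Real.Gamma (ν+1+(N:ℝ)))⁻¹ :=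
          hFub (m+1)
        apply mul_le_mul hKpow hFm hFposm.le (by positivity)
      have heq : ((K:ℝ)^N * (K:ℝ)^(m+1)) * (2 * ((((m+1).factorial : ℝ)) * Real.Gamma (ν+1+(N:ℝ)))⁻¹)
          = C * ((K:ℝ)^(m+1) / (((m+1).factorial : ℝ))) := by
        rw [hC]
        have hfm : (((m+1).factorial : ℝ)) ≠ 0 := by positivity
        field_simp
      linarith [step1, step2, heq ▸ step2]
    have htend : Filter.Tendsto (fun m : ℕ => C * ((K:ℝ)^(m+1) / (((m+1).factorial : ℝ))))
        Filter.atTop (nhds 0) := by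
      have h1 := FloorSemiring.tendsto_pow_div_factorial_atTop (K:ℝ)
      have h2 := h1.comp (Filter.tendsto_add_atTop_nat 1)
      have h3 := h2.const_mul C
      simpa using h3
    have : |F 1| ≤ 0 := ge_of_tendsto' htend hub
    exact hF1 (abs_eq_zero.mp (le_antisymm this (abs_nonneg _)))
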